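/- arXiv:2508.06940 — 2 statements merged into one kernel-verified Lean document; each statement's English description precedes it below -/
import Mathlib

section
/- Let 0 ≤ ρ ≤ 1 and set λ := ln(ρ·(1/μ*) + 1−ρ) / ln(1/μ*). Then for every nonnegative function f : Ω → ℝ it holds that ‖T_ρ f‖_∞ ≤ ‖f‖_1^{1−λ} · ‖f‖_∞^{λ}. Moreover, for 0 < ρ < 1, equality holds if and only if f is constant, or f has exactly one nonzero value, attained at a point x* with μ(x*) = μ*. -/
/-!
Let `M = max f` and `E = 𝔼 f = ‖f‖₁`. Then `‖T_ρ f‖_∞ = ρ M + (1 - ρ) E` and the right-hand side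
is `E ^ (1 - λ) M ^ λ`, so with `t = E / M ∈ [μ*, 1]` the inequality reads
`ρ + (1 - ρ) t ≤ t ^ (1 - λ)`. The exponent `λ` is exactly the one for which
`μ* ^ (1 - λ) = ρ + (1 - ρ) μ*`, so the left-hand side is the chord of the concave function
`t ↦ t ^ (1 - λ)` between `t = μ*` and `t = 1`. Strict concavity leaves equality only at the two
endpoints: `t = 1` means `f` is constant, and `t = μ*` means `f` lives on a single point of
minimal mass.
-/

open Finset

/-- Expectation of `f` under the probability mass function `μ` on a finite set. -/
noncomputable def expct {Ω : Type*} [Fintype Ω] (μ : Ω → ℝ) (f : Ω → ℝ) : ℝ :=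
  ∑ x, μ x * f x

/-- The noise operator `T_ρ f = ρ f + (1-ρ) E[f]`. -/
noncomputable def noiseOp {Ω : Type*} [Fintype Ω] (μ : Ω → ℝ) (ρ : ℝ) (f : Ω → ℝ) : Ω → ℝ :=
  fun x => ρ * f x + (1 - ρ) * expct μ f

/-- The `q`-norm `(E_{x∼μ} |f(x)|^q)^{1/q}`. -/
noncomputable def qNorm {Ω : Type*} [Fintype Ω] (μ : Ω → ℝ) (q : ℝ) (f : Ω → ℝ) : ℝ :=
  (∑ x, μ x * |f x| ^ q) ^ (1 / q)

/-- The `∞`-norm `max_{x∈Ω} |f(x)|`. -/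
noncomputable def infNorm {Ω : Type*} [Fintype Ω] (f : Ω → ℝ) : ℝ :=
  ⨆ x, |f x|

lemma exponent_mem_Icc_of_chord {ρ m p : ℝ} (hρ0 : 0 ≤ ρ) (hρ1 : ρ ≤ 1) (hm0 : 0 < m)
    (hm1 : m < 1) (hchord : m ^ p = ρ + (1 - ρ) * m) : 0 ≤ p ∧ p ≤ 1 := by
  constructor
  · rw [← Real.rpow_le_rpow_left_iff_of_base_lt_one hm0 hm1, Real.rpow_zero, hchord]
    nlinarith
  · rw [← Real.rpow_le_rpow_left_iff_of_base_lt_one hm0 hm1, Real.rpow_one, hchord]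
    nlinarith

lemma exponent_mem_Ioo_of_chord {ρ m p : ℝ} (hρ0 : 0 < ρ) (hρ1 : ρ < 1) (hm0 : 0 < m)
    (hm1 : m < 1) (hchord : m ^ p = ρ + (1 - ρ) * m) : 0 < p ∧ p < 1 := by
  constructor
  · rw [← Real.rpow_lt_rpow_left_iff_of_base_lt_one hm0 hm1, Real.rpow_zero, hchord]
    nlinarith
  · rw [← Real.rpow_lt_rpow_left_iff_of_base_lt_one hm0 hm1, Real.rpow_one, hchord]
    nlinarith

lemma convexOn_affine {s : Set ℝ} (hs : Convex ℝ s) (a b : ℝ) :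
    ConvexOn ℝ s fun t : ℝ => a + b * t :=
  ⟨hs, fun x _ y _ α β _ _ hαβ => by
    simp only [smul_eq_mul]
    linear_combination (-a) * hαβ⟩

lemma chord_le_rpow {ρ m p t : ℝ} (hρ0 : 0 ≤ ρ) (hρ1 : ρ ≤ 1) (hm : 0 < m) (hmt : m ≤ t)
    (ht : t ≤ 1) (hchord : m ^ p = ρ + (1 - ρ) * m) : ρ + (1 - ρ) * t ≤ t ^ p := by
  rcases ht.eq_or_lt with rfl | ht
  · simp
  obtain ⟨hp0, hp1⟩ := exponent_mem_Icc_of_chord hρ0 hρ1 hm (hmt.trans_lt ht) hchord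
  have hconc := (Real.concaveOn_rpow hp0 hp1).sub (convexOn_affine (convex_Ici 0) ρ (1 - ρ))
  have := hconc.ge_on_segment (Set.mem_Ici.2 hm.le) (Set.mem_Ici.2 zero_le_one)
    (z := t) (by rw [segment_eq_Icc (hmt.trans ht.le)]; exact ⟨hmt, ht.le⟩)
  have hg1 : (1 : ℝ) ^ p - (ρ + (1 - ρ) * 1) = 0 := by rw [Real.one_rpow]; ring
  simp only [Pi.sub_apply, hchord, sub_self, hg1, min_self] at this
  linarith

lemma chord_lt_rpow {ρ m p t : ℝ} (hρ0 : 0 < ρ) (hρ1 : ρ < 1) (hm : 0 < m) (hmt : m < t)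
    (ht : t < 1) (hchord : m ^ p = ρ + (1 - ρ) * m) : ρ + (1 - ρ) * t < t ^ p := by
  obtain ⟨hp0, hp1⟩ := exponent_mem_Ioo_of_chord hρ0 hρ1 hm (hmt.trans ht) hchord
  have hconc := (Real.strictConcaveOn_rpow hp0 hp1).sub_convexOn
    (convexOn_affine (convex_Ici 0) ρ (1 - ρ))
  have := hconc.lt_on_openSegment (Set.mem_Ici.2 hm.le) (Set.mem_Ici.2 zero_le_one)
    (hmt.trans ht).ne (z := t) (by rw [openSegment_eq_Ioo (hmt.trans ht)]; exact ⟨hmt, ht⟩)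
  have hg1 : (1 : ℝ) ^ p - (ρ + (1 - ρ) * 1) = 0 := by rw [Real.one_rpow]; ring
  simp only [Pi.sub_apply, hchord, sub_self, hg1, min_self] at this
  linarith

lemma rpow_one_sub_log_div_log {ρ m : ℝ} (hm : 0 < m) (hρm : 0 < ρ + (1 - ρ) * m) :
    m ^ (1 - Real.log (ρ * (1 / m) + 1 - ρ) / Real.log (1 / m)) = ρ + (1 - ρ) * m := by
  -- at `m = 1` the exponent is the junk value `0 / 0 = 0`, which still satisfies the identity
  rcases eq_or_ne m 1 with rfl | hm1
  · simp
  have hA : ρ * (1 / m) + 1 - ρ = (ρ + (1 - ρ) * m) / m := by field_simp; ring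
  have hlogm : Real.log m ≠ 0 := Real.log_ne_zero_of_pos_of_ne_one hm hm1
  have hexp : Real.log m * (1 - Real.log (ρ * (1 / m) + 1 - ρ) / Real.log (1 / m))
      = Real.log (ρ + (1 - ρ) * m) := by
    rw [one_div, Real.log_inv, ← one_div, hA, Real.log_div hρm.ne' hm.ne']
    field_simp
    ring
  rw [Real.rpow_def_of_pos hm, hexp, Real.exp_log hρm]

lemma rpow_one_sub_mul_rpow_eq_div {E M : ℝ} (hE : 0 ≤ E) (hM : 0 < M) (p : ℝ) :
    E ^ (1 - p) * M ^ p = (E / M) ^ (1 - p) * M := by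
  rw [Real.div_rpow hE hM.le, div_mul_eq_mul_div, eq_div_iff (by positivity), mul_assoc,
    ← Real.rpow_add hM]
  simp

section Homogeneous

variable {ρ lam m E M : ℝ}

lemma add_mul_le_rpow_mul_rpow (hρ0 : 0 ≤ ρ) (hρ1 : ρ ≤ 1) (hm : 0 < m)
    (hchord : m ^ (1 - lam) = ρ + (1 - ρ) * m) (hM : 0 ≤ M) (hmE : m * M ≤ E) (hEM : E ≤ M) :
    ρ * M + (1 - ρ) * E ≤ E ^ (1 - lam) * M ^ lam := by
  have hE : 0 ≤ E := (mul_nonneg hm.le hM).trans hmE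
  rcases hM.eq_or_lt with rfl | hM
  · rw [le_antisymm hEM hE]
    simp only [mul_zero, add_zero]
    positivity
  rw [rpow_one_sub_mul_rpow_eq_div hE hM]
  calc ρ * M + (1 - ρ) * E = (ρ + (1 - ρ) * (E / M)) * M := by field_simp
    _ ≤ (E / M) ^ (1 - lam) * M := by
      gcongr
      exact chord_le_rpow hρ0 hρ1 hm ((le_div_iff₀ hM).2 hmE) ((div_le_one hM).2 hEM) hchord

lemma add_mul_eq_rpow_mul_rpow_iff (hρ0 : 0 < ρ) (hρ1 : ρ < 1) (hm : 0 < m)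
    (hchord : m ^ (1 - lam) = ρ + (1 - ρ) * m) (hM : 0 ≤ M) (hmE : m * M ≤ E) (hEM : E ≤ M) :
    ρ * M + (1 - ρ) * E = E ^ (1 - lam) * M ^ lam ↔ E = M ∨ (0 < M ∧ E = m * M) := by
  have hE : 0 ≤ E := (mul_nonneg hm.le hM).trans hmE
  constructor
  · intro heq
    rcases hM.eq_or_lt with rfl | hM
    · exact .inl (le_antisymm hEM hE)
    rcases hEM.eq_or_lt with hEM | hEM
    · exact .inl hEM
    rcases hmE.eq_or_lt with hmE | hmE
    · exact .inr ⟨hM, hmE.symm⟩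
    have hlt := chord_lt_rpow hρ0 hρ1 hm ((lt_div_iff₀ hM).2 hmE) ((div_lt_one hM).2 hEM) hchord
    rw [rpow_one_sub_mul_rpow_eq_div hE hM] at heq
    have : ρ * M + (1 - ρ) * E < (E / M) ^ (1 - lam) * M := by
      calc ρ * M + (1 - ρ) * E = (ρ + (1 - ρ) * (E / M)) * M := by field_simp
        _ < (E / M) ^ (1 - lam) * M := by gcongr
    exact absurd heq this.ne
  · rintro (rfl | ⟨hM, rfl⟩)
    · rw [← Real.rpow_add' hM (by norm_num), sub_add_cancel, Real.rpow_one]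
      ring
    · rw [Real.mul_rpow hm.le hM.le, mul_assoc, ← Real.rpow_add hM, hchord, sub_add_cancel,
        Real.rpow_one]
      ring

end Homogeneous

section FiniteProbability

variable {Ω : Type*} [Fintype Ω] {μ : Ω → ℝ} {f : Ω → ℝ}

lemma infNorm_eq_of_forall_le (hf : ∀ x, 0 ≤ f x) {x₀ : Ω} (hx₀ : ∀ y, f y ≤ f x₀) :
    infNorm f = f x₀ := by
  have : Nonempty Ω := ⟨x₀⟩
  refine le_antisymm (ciSup_le fun y => ?_) (le_ciSup_of_le (Finite.bddAbove_range _) x₀ ?_)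
  · rw [abs_of_nonneg (hf y)]; exact hx₀ y
  · rw [abs_of_nonneg (hf x₀)]

lemma qNorm_one_eq_expct (hf : ∀ x, 0 ≤ f x) : qNorm μ 1 f = expct μ f := by
  simp [qNorm, expct, abs_of_nonneg (hf _)]

lemma expct_nonneg (hμ : ∀ x, 0 ≤ μ x) (hf : ∀ x, 0 ≤ f x) : 0 ≤ expct μ f :=
  sum_nonneg fun x _ => mul_nonneg (hμ x) (hf x)

lemma expct_eq_zero_iff (hμ : ∀ x, 0 < μ x) (hf : ∀ x, 0 ≤ f x) :
    expct μ f = 0 ↔ ∀ x, f x = 0 := by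
  simp [expct, sum_eq_zero_iff_of_nonneg fun x _ => mul_nonneg (hμ x).le (hf x), (hμ _).ne']

lemma expct_const_sub (hμ : ∑ x, μ x = 1) (c : ℝ) :
    expct μ (fun x => c - f x) = c - expct μ f := by
  simp [expct, mul_sub, sum_sub_distrib, ← sum_mul, hμ]

lemma mul_le_expct (hμ : ∀ x, 0 ≤ μ x) (hf : ∀ x, 0 ≤ f x) (x₀ : Ω) :
    μ x₀ * f x₀ ≤ expct μ f :=
  single_le_sum (f := fun x => μ x * f x) (fun x _ => mul_nonneg (hμ x) (hf x)) (mem_univ x₀)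

lemma expct_eq_mul_iff (hμ : ∀ x, 0 < μ x) (hf : ∀ x, 0 ≤ f x) (x₀ : Ω) :
    expct μ f = μ x₀ * f x₀ ↔ ∀ y, y ≠ x₀ → f y = 0 := by
  classical
  rw [expct, ← add_sum_erase _ _ (mem_univ x₀), add_eq_left,
    sum_eq_zero_iff_of_nonneg fun x _ => mul_nonneg (hμ x).le (hf x)]
  simp [(hμ _).ne']

lemma expct_le_of_forall_le (hμ : ∀ x, 0 ≤ μ x) (hμsum : ∑ x, μ x = 1) {M : ℝ}
    (hM : ∀ x, f x ≤ M) : expct μ f ≤ M := by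
  have := expct_nonneg hμ fun x => sub_nonneg.2 (hM x)
  rw [expct_const_sub hμsum] at this
  linarith

lemma expct_eq_iff_forall_eq (hμ : ∀ x, 0 < μ x) (hμsum : ∑ x, μ x = 1) {M : ℝ}
    (hM : ∀ x, f x ≤ M) : expct μ f = M ↔ ∀ x, f x = M := by
  rw [eq_comm, ← sub_eq_zero, ← expct_const_sub hμsum,
    expct_eq_zero_iff hμ fun x => sub_nonneg.2 (hM x)]
  simp only [sub_eq_zero, eq_comm]

lemma pos_and_expct_eq_mul_iff_exists_single (hμ : ∀ x, 0 < μ x) (hf : ∀ x, 0 ≤ f x) {m : ℝ}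
    (hm : ∀ x, m ≤ μ x) {x₀ : Ω} (hx₀ : ∀ y, f y ≤ f x₀) :
    (0 < f x₀ ∧ expct μ f = m * f x₀) ↔ ∃ xs, μ xs = m ∧ f xs ≠ 0 ∧ ∀ y, y ≠ xs → f y = 0 := by
  constructor
  · rintro ⟨hpos, hE⟩
    have hμx₀ : μ x₀ = m := by
      have := (mul_le_expct (fun x => (hμ x).le) hf x₀).trans_eq hE
      exact le_antisymm (le_of_mul_le_mul_right this hpos) (hm x₀)
    refine ⟨x₀, hμx₀, hpos.ne', (expct_eq_mul_iff hμ hf x₀).1 ?_⟩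
    rw [hE, hμx₀]
  · rintro ⟨xs, hμxs, hfxs, hzero⟩
    obtain rfl : x₀ = xs := by
      by_contra hne
      exact hfxs (le_antisymm ((hx₀ xs).trans_eq (hzero x₀ hne)) (hf xs))
    refine ⟨(hf x₀).lt_of_ne' hfxs, ?_⟩
    rw [(expct_eq_mul_iff hμ hf x₀).2 hzero, hμxs]

lemma infNorm_noiseOp (hμ : ∀ x, 0 ≤ μ x) (hf : ∀ x, 0 ≤ f x) {ρ : ℝ} (hρ0 : 0 ≤ ρ)
    (hρ1 : ρ ≤ 1) {x₀ : Ω} (hx₀ : ∀ y, f y ≤ f x₀) :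
    infNorm (noiseOp μ ρ f) = ρ * f x₀ + (1 - ρ) * expct μ f := by
  have hE := expct_nonneg hμ hf
  exact infNorm_eq_of_forall_le
    (fun x => add_nonneg (mul_nonneg hρ0 (hf x)) (mul_nonneg (sub_nonneg.2 hρ1) hE))
    fun y => by gcongr; exact hx₀ y

end FiniteProbability

theorem stmt2_general {Ω : Type*} [Fintype Ω]
    (μ : Ω → ℝ) (hμpos : ∀ x, 0 < μ x) (hμsum : ∑ x, μ x = 1)
    (μs : ℝ) (hμs_le : ∀ x, μs ≤ μ x) (hμs_mem : ∃ x, μ x = μs)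
    (ρ lam : ℝ) (hρ0 : 0 ≤ ρ) (hρ1 : ρ ≤ 1)
    (hlam : lam = Real.log (ρ * (1 / μs) + 1 - ρ) / Real.log (1 / μs))
    (f : Ω → ℝ) (hf : ∀ x, 0 ≤ f x) :
    infNorm (noiseOp μ ρ f) ≤ qNorm μ 1 f ^ (1 - lam) * infNorm f ^ lam ∧
      (0 < ρ → ρ < 1 →
        (infNorm (noiseOp μ ρ f) = qNorm μ 1 f ^ (1 - lam) * infNorm f ^ lam ↔
          (∃ c : ℝ, ∀ x, f x = c) ∨
            (∃ xs, μ xs = μs ∧ f xs ≠ 0 ∧ ∀ y, y ≠ xs → f y = 0))) := by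
  obtain ⟨x₀, rfl⟩ := hμs_mem
  have : Nonempty Ω := ⟨x₀⟩
  obtain ⟨xM, hxM⟩ := Finite.exists_max f
  have hμ : ∀ x, 0 ≤ μ x := fun x => (hμpos x).le
  have hρμ : 0 < ρ + (1 - ρ) * μ x₀ := by
    rcases hρ0.eq_or_lt with rfl | hρ
    · simpa using hμpos x₀
    · nlinarith [mul_nonneg (sub_nonneg.2 hρ1) (hμ x₀)]
  have hchord : μ x₀ ^ (1 - lam) = ρ + (1 - ρ) * μ x₀ :=
    hlam ▸ rpow_one_sub_log_div_log (hμpos x₀) hρμ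
  have hmE : μ x₀ * f xM ≤ expct μ f :=
    (mul_le_mul_of_nonneg_right (hμs_le xM) (hf xM)).trans (mul_le_expct hμ hf xM)
  have hEM : expct μ f ≤ f xM := expct_le_of_forall_le hμ hμsum hxM
  rw [infNorm_noiseOp hμ hf hρ0 hρ1 hxM, qNorm_one_eq_expct hf, infNorm_eq_of_forall_le hf hxM]
  refine ⟨add_mul_le_rpow_mul_rpow hρ0 hρ1 (hμpos x₀) hchord (hf xM) hmE hEM, fun hρ0' hρ1' => ?_⟩
  rw [add_mul_eq_rpow_mul_rpow_iff hρ0' hρ1' (hμpos x₀) hchord (hf xM) hmE hEM,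
    expct_eq_iff_forall_eq hμpos hμsum hxM,
    pos_and_expct_eq_mul_iff_exists_single hμpos hf hμs_le hxM]
  exact or_congr_left ⟨fun h => ⟨_, h⟩, fun ⟨c, hc⟩ x => (hc x).trans (hc xM).symm⟩

theorem stmt2 {Ω : Type*} [Fintype Ω] [Nonempty Ω] (hΩ : 2 ≤ Fintype.card Ω)
    (μ : Ω → ℝ) (hμpos : ∀ x, 0 < μ x) (hμsum : ∑ x, μ x = 1)
    (μs : ℝ) (hμs_le : ∀ x, μs ≤ μ x) (hμs_mem : ∃ x, μ x = μs)
    (ρ lam : ℝ) (hρ0 : 0 ≤ ρ) (hρ1 : ρ ≤ 1)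
    (hlam : lam = Real.log (ρ * (1 / μs) + 1 - ρ) / Real.log (1 / μs))
    (f : Ω → ℝ) (hf : ∀ x, 0 ≤ f x) :
    infNorm (noiseOp μ ρ f) ≤ qNorm μ 1 f ^ (1 - lam) * infNorm f ^ lam ∧
      (0 < ρ → ρ < 1 →
        (infNorm (noiseOp μ ρ f) = qNorm μ 1 f ^ (1 - lam) * infNorm f ^ lam ↔
          (∃ c : ℝ, ∀ x, f x = c) ∨
            (∃ xs, μ xs = μs ∧ f xs ≠ 0 ∧ ∀ y, y ≠ xs → f y = 0))) :=
  stmt2_general μ hμpos hμsum μs hμs_le hμs_mem ρ lam hρ0 hρ1 hlam f hf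
end

section
/- Let −μ*/(1−μ*) ≤ ρ ≤ 1 and set λ := ln(ρ·(1/μ*) + 1−ρ)/ln(1/μ*) if ρ ≥ 0, and λ := −ln(1−ρ)/ln(1−μ*) if ρ < 0. Then for every nonnegative function f : Ω^n → ℝ it holds that ‖T_ρ f‖_∞ ≤ ∏_{S⊆{1,…,n}} ‖E(f|S)‖_∞^{λ^{|S|}·(1−λ)^{n−|S|}} (with the convention 0^0 = 1 in the exponents). -/
open Finset

/-- Expectation of `f : Ω^n → ℝ` under the product measure `μ^{⊗n}`. -/
noncomputable def pExpct {Ω : Type*} [Fintype Ω] (μ : Ω → ℝ) {n : ℕ}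
    (f : (Fin n → Ω) → ℝ) : ℝ :=
  ∑ x : Fin n → Ω, (∏ i, μ (x i)) * f x

/-- Conditional expectation on the coordinates in `S`:
`E(f|S)(x) = E_{y∼μ^{⊗n}} f(z)` where `z_i = x_i` for `i ∈ S` and `z_i = y_i` otherwise. -/
noncomputable def condExp {Ω : Type*} [Fintype Ω] (μ : Ω → ℝ) {n : ℕ}
    (S : Finset (Fin n)) (f : (Fin n → Ω) → ℝ) : (Fin n → Ω) → ℝ :=
  fun x => pExpct μ (fun y => f (S.piecewise x y))

/-- The noise operator on all `n` coordinates: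
`T_ρ f = Σ_S ρ^{|S|} (1-ρ)^{n-|S|} E(f|S)`. -/
noncomputable def noiseOpN {Ω : Type*} [Fintype Ω] (μ : Ω → ℝ) {n : ℕ}
    (ρ : ℝ) (f : (Fin n → Ω) → ℝ) : (Fin n → Ω) → ℝ :=
  fun x => ∑ S : Finset (Fin n), ρ ^ S.card * (1 - ρ) ^ (n - S.card) * condExp μ S f x

/-- The `1`-norm with respect to the product measure. -/
noncomputable def p1Norm {Ω : Type*} [Fintype Ω] (μ : Ω → ℝ) {n : ℕ}
    (f : (Fin n → Ω) → ℝ) : ℝ :=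
  ∑ x : Fin n → Ω, (∏ i, μ (x i)) * |f x|

/-- The `∞`-norm `max_{x∈Ω^n} |f(x)|`. -/
noncomputable def pInfNorm {Ω : Type*} [Fintype Ω] {n : ℕ} (f : (Fin n → Ω) → ℝ) : ℝ :=
  ⨆ x : Fin n → Ω, |f x|

/-!
The bound tensorizes. Splitting off the first coordinate,
`T_ρ f (y, x') = ρ g y + (1 - ρ) E g` with `g b = T_ρ f(b, ·) (x')`, so by induction on `n` it
suffices to prove the one-coordinate inequality `ρ g x + (1 - ρ) E g ≤ M ^ λ (E g) ^ (1 - λ)` for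
`0 ≤ g ≤ M`: the induction hypothesis bounds `max g` through the `E(f | {0} ∪ S)` and `E g`
through the `E(f | S)`, `S ⊆ {1, …, n}`.
With `M = max g` and `m = E g`, the right-hand side is concave in `m`, and `λ` is exactly the
exponent for which it meets an affine upper bound of the left-hand side at both ends of an interval
of admissible `m`: `ρ M + (1 - ρ) m` on `[μ* M, M]` when `ρ ≥ 0`; when `ρ < 0`, `(1 - ρ) m` on
`[0, (1 - μ*) M]` and `ρ (M - (M - m) / μ*) + (1 - ρ) m` on `[(1 - μ*) M, M]`.
-/

section FinSubsets

variable {n : ℕ}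

@[to_additive]
theorem prod_finset_fin_succ {M : Type*} [CommMonoid M] (H : Finset (Fin (n + 1)) → M) :
    ∏ S, H S = ∏ S : Finset (Fin n),
      H (S.map (Fin.succEmb n)) * H (insert 0 (S.map (Fin.succEmb n))) := by
  have himage : (univ.map (Fin.succEmb n)).powerset
      = univ.image fun S : Finset (Fin n) => S.map (Fin.succEmb n) := by
    ext T
    simp [subset_map_iff, eq_comm]
  have huniv : (univ : Finset (Fin (n + 1))) = insert 0 (univ.map (Fin.succEmb n)) := by
    rw [← cons_eq_insert]
    exact Fin.univ_succ n
  rw [← powerset_univ, huniv, prod_powerset_insert (by simp), himage,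
    prod_image fun S _ T _ h => map_injective _ h, prod_image fun S _ T _ h => map_injective _ h,
    ← prod_mul_distrib]

theorem weight_map_succ (r : ℝ) (S : Finset (Fin n)) :
    r ^ #(S.map (Fin.succEmb n)) * (1 - r) ^ (n + 1 - #(S.map (Fin.succEmb n)))
      = (1 - r) * (r ^ #S * (1 - r) ^ (n - #S)) := by
  have hS := S.card_le_univ
  rw [Fintype.card_fin] at hS
  rw [card_map, Nat.sub_add_comm hS, pow_succ]
  ring

theorem weight_insert_zero (r : ℝ) (S : Finset (Fin n)) :
    r ^ #(insert 0 (S.map (Fin.succEmb n)))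
        * (1 - r) ^ (n + 1 - #(insert 0 (S.map (Fin.succEmb n))))
      = r * (r ^ #S * (1 - r) ^ (n - #S)) := by
  rw [card_insert_of_notMem (by simp), card_map, Nat.add_sub_add_right, pow_succ]
  ring

theorem prod_rpow_weight_succ {a : Finset (Fin (n + 1)) → ℝ} (ha : ∀ S, 0 ≤ a S) (r : ℝ) :
    ∏ S, a S ^ (r ^ #S * (1 - r) ^ (n + 1 - #S))
      = (∏ S : Finset (Fin n),
            a (insert 0 (S.map (Fin.succEmb n))) ^ (r ^ #S * (1 - r) ^ (n - #S))) ^ r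
        * (∏ S : Finset (Fin n),
            a (S.map (Fin.succEmb n)) ^ (r ^ #S * (1 - r) ^ (n - #S))) ^ (1 - r) := by
  rw [prod_finset_fin_succ, ← Real.finsetProd_rpow _ _ (fun S _ => Real.rpow_nonneg (ha _) _),
    ← Real.finsetProd_rpow _ _ (fun S _ => Real.rpow_nonneg (ha _) _), ← prod_mul_distrib]
  refine prod_congr rfl fun S _ => ?_
  rw [weight_map_succ, weight_insert_zero, ← Real.rpow_mul (ha _), ← Real.rpow_mul (ha _),
    mul_comm, mul_comm r, mul_comm (1 - r)]

end FinSubsets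

section FirstCoordinate

variable {n : ℕ} {Ω : Type*}

theorem piecewise_map_succ_cons (S : Finset (Fin n)) (a b : Ω) (x z : Fin n → Ω) :
    (S.map (Fin.succEmb n)).piecewise (Fin.cons a x : Fin (n + 1) → Ω) (Fin.cons b z)
      = Fin.cons b (S.piecewise x z) := by
  ext i
  cases i using Fin.cases <;> simp [Finset.piecewise]

theorem piecewise_insert_zero_cons (S : Finset (Fin n)) (a b : Ω) (x z : Fin n → Ω) :
    (insert 0 (S.map (Fin.succEmb n))).piecewise (Fin.cons a x : Fin (n + 1) → Ω) (Fin.cons b z)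
      = Fin.cons a (S.piecewise x z) := by
  ext i
  cases i using Fin.cases <;> simp [Finset.piecewise]

variable [Fintype Ω]

theorem sum_fin_succ_pi {M : Type*} [AddCommMonoid M] (G : (Fin (n + 1) → Ω) → M) :
    ∑ w, G w = ∑ y, ∑ z, G (Fin.cons y z) := by
  rw [← (Fin.consEquiv fun _ => Ω).sum_comp, Fintype.sum_prod_type]
  rfl

variable (μ : Ω → ℝ)

theorem pExpct_fin_succ (g : (Fin (n + 1) → Ω) → ℝ) :
    pExpct μ g = ∑ y, μ y * pExpct μ (fun z => g (Fin.cons y z)) := by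
  simp only [pExpct, sum_fin_succ_pi, Fin.prod_univ_succ, Fin.cons_zero, Fin.cons_succ, mul_sum]
  exact sum_congr rfl fun y _ => sum_congr rfl fun z _ => by ring

theorem pExpct_sum {ι : Type*} [Fintype ι] (c : ι → ℝ) (g : ι → (Fin n → Ω) → ℝ) :
    pExpct μ (fun z => ∑ b, c b * g b z) = ∑ b, c b * pExpct μ (g b) := by
  simp only [pExpct, mul_sum]
  rw [sum_comm]
  exact sum_congr rfl fun b _ => sum_congr rfl fun x _ => by ring

theorem condExp_sum {ι : Type*} [Fintype ι] (c : ι → ℝ) (g : ι → (Fin n → Ω) → ℝ)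
    (S : Finset (Fin n)) (x : Fin n → Ω) :
    condExp μ S (fun z => ∑ b, c b * g b z) x = ∑ b, c b * condExp μ S (g b) x :=
  pExpct_sum μ c fun b y => g b (S.piecewise x y)

theorem noiseOpN_sum {ι : Type*} [Fintype ι] (ρ : ℝ) (c : ι → ℝ) (g : ι → (Fin n → Ω) → ℝ)
    (x : Fin n → Ω) :
    noiseOpN μ ρ (fun z => ∑ b, c b * g b z) x = ∑ b, c b * noiseOpN μ ρ (g b) x := by
  simp only [noiseOpN, condExp_sum, mul_sum]
  rw [sum_comm]
  exact sum_congr rfl fun b _ => sum_congr rfl fun S _ => by ring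

theorem condExp_map_succ_cons (S : Finset (Fin n)) (f : (Fin (n + 1) → Ω) → ℝ) (y : Ω)
    (x : Fin n → Ω) :
    condExp μ (S.map (Fin.succEmb n)) f (Fin.cons y x)
      = ∑ b, μ b * condExp μ S (fun z => f (Fin.cons b z)) x := by
  simp only [condExp, pExpct_fin_succ μ, piecewise_map_succ_cons]

theorem condExp_insert_zero_cons (hμ : ∑ b, μ b = 1) (S : Finset (Fin n))
    (f : (Fin (n + 1) → Ω) → ℝ) (y : Ω) (x : Fin n → Ω) :
    condExp μ (insert 0 (S.map (Fin.succEmb n))) f (Fin.cons y x)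
      = condExp μ S (fun z => f (Fin.cons y z)) x := by
  simp only [condExp, pExpct_fin_succ μ, piecewise_insert_zero_cons, ← sum_mul, hμ, one_mul]

theorem noiseOpN_cons (hμ : ∑ b, μ b = 1) (ρ : ℝ) (f : (Fin (n + 1) → Ω) → ℝ) (y : Ω)
    (x : Fin n → Ω) :
    noiseOpN μ ρ f (Fin.cons y x)
      = ρ * noiseOpN μ ρ (fun z => f (Fin.cons y z)) x
        + (1 - ρ) * ∑ b, μ b * noiseOpN μ ρ (fun z => f (Fin.cons b z)) x := by
  rw [← noiseOpN_sum]
  simp only [noiseOpN, sum_finset_fin_succ, weight_map_succ, weight_insert_zero,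
    condExp_map_succ_cons, condExp_insert_zero_cons μ hμ, condExp_sum, mul_sum, sum_add_distrib]
  rw [add_comm]
  simp only [mul_assoc]

theorem condExp_fin_zero (S : Finset (Fin 0)) (f : (Fin 0 → Ω) → ℝ) : condExp μ S f = f := by
  ext x
  simp [condExp, pExpct, Subsingleton.elim _ x]

theorem noiseOpN_fin_zero (ρ : ℝ) (f : (Fin 0 → Ω) → ℝ) : noiseOpN μ ρ f = f := by
  ext x
  simp [noiseOpN, condExp_fin_zero, univ_unique, Subsingleton.elim default ∅]

end FirstCoordinate

section SupNorm

variable {n : ℕ} {Ω : Type*} [Fintype Ω] {μ : Ω → ℝ}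

theorem abs_le_pInfNorm (f : (Fin n → Ω) → ℝ) (x : Fin n → Ω) : |f x| ≤ pInfNorm f :=
  le_ciSup (f := fun x => |f x|) (Set.finite_range _).bddAbove x

theorem le_pInfNorm (f : (Fin n → Ω) → ℝ) (x : Fin n → Ω) : f x ≤ pInfNorm f :=
  (le_abs_self _).trans (abs_le_pInfNorm f x)

theorem pInfNorm_nonneg (f : (Fin n → Ω) → ℝ) : 0 ≤ pInfNorm f :=
  Real.iSup_nonneg fun _ => abs_nonneg _

theorem pInfNorm_le {f : (Fin n → Ω) → ℝ} {c : ℝ} (h : ∀ x, |f x| ≤ c) (hc : 0 ≤ c) :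
    pInfNorm f ≤ c :=
  Real.iSup_le h hc

theorem pInfNorm_condExp_slice_le (hμ : ∑ b, μ b = 1) (S : Finset (Fin n))
    (f : (Fin (n + 1) → Ω) → ℝ) (y : Ω) :
    pInfNorm (condExp μ S (fun z => f (Fin.cons y z)))
      ≤ pInfNorm (condExp μ (insert 0 (S.map (Fin.succEmb n))) f) :=
  pInfNorm_le (fun x => condExp_insert_zero_cons μ hμ S f y x ▸ abs_le_pInfNorm _ _)
    (pInfNorm_nonneg _)

theorem pInfNorm_condExp_average_le [Nonempty Ω] (S : Finset (Fin n))
    (f : (Fin (n + 1) → Ω) → ℝ) :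
    pInfNorm (condExp μ S (fun z => ∑ b, μ b * f (Fin.cons b z)))
      ≤ pInfNorm (condExp μ (S.map (Fin.succEmb n)) f) := by
  refine pInfNorm_le (fun x => ?_) (pInfNorm_nonneg _)
  rw [condExp_sum, ← condExp_map_succ_cons μ S f (Classical.arbitrary Ω)]
  exact abs_le_pInfNorm _ _

end SupNorm

section Tensorization

variable {Ω : Type*} [Fintype Ω] {μ : Ω → ℝ} {ρ lam : ℝ}

theorem noiseOpN_nonneg (hμ : ∑ b, μ b = 1)
    (hpos : ∀ g : Ω → ℝ, (∀ y, 0 ≤ g y) → ∀ x, 0 ≤ ρ * g x + (1 - ρ) * ∑ y, μ y * g y) :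
    ∀ {n : ℕ} (f : (Fin n → Ω) → ℝ), (∀ x, 0 ≤ f x) → ∀ x, 0 ≤ noiseOpN μ ρ f x
  | 0, f, hf, x => by rw [noiseOpN_fin_zero]; exact hf x
  | n + 1, f, hf, x => by
    induction x using Fin.consCases with | cons y x => ?_
    rw [noiseOpN_cons μ hμ]
    exact hpos _ (fun b => noiseOpN_nonneg hμ hpos _ (fun z => hf _) x) y

theorem noiseOpN_le_prod (hμ0 : ∀ b, 0 ≤ μ b) (hμ : ∑ b, μ b = 1)
    (hpos : ∀ g : Ω → ℝ, (∀ y, 0 ≤ g y) → ∀ x, 0 ≤ ρ * g x + (1 - ρ) * ∑ y, μ y * g y)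
    (hlam0 : 0 ≤ lam) (hlam1 : lam ≤ 1)
    (hstep : ∀ g : Ω → ℝ, (∀ y, 0 ≤ g y) → ∀ M, (∀ y, g y ≤ M) → ∀ x,
      ρ * g x + (1 - ρ) * ∑ y, μ y * g y ≤ M ^ lam * (∑ y, μ y * g y) ^ (1 - lam)) :
    ∀ {n : ℕ} (f : (Fin n → Ω) → ℝ), (∀ x, 0 ≤ f x) → ∀ x,
      noiseOpN μ ρ f x ≤ ∏ S : Finset (Fin n),
        pInfNorm (condExp μ S f) ^ (lam ^ #S * (1 - lam) ^ (n - #S))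
  | 0, f, _, x => by
    simpa [noiseOpN_fin_zero, condExp_fin_zero, eq_empty_of_isEmpty] using le_pInfNorm f x
  | n + 1, f, hf, x => by
    induction x using Fin.consCases with | cons y x => ?_
    have : Nonempty Ω := ⟨y⟩
    set g : Ω → ℝ := fun b => noiseOpN μ ρ (fun z => f (Fin.cons b z)) x
    have hw : ∀ S : Finset (Fin n), 0 ≤ lam ^ #S * (1 - lam) ^ (n - #S) := fun S => by
      have : 0 ≤ 1 - lam := by linarith
      positivity
    have hg0 : ∀ b, 0 ≤ g b := fun b => noiseOpN_nonneg hμ hpos _ (fun z => hf _) x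
    have hm0 : 0 ≤ ∑ b, μ b * g b := sum_nonneg fun b _ => mul_nonneg (hμ0 b) (hg0 b)
    have hg : ∀ b, g b ≤ ∏ S : Finset (Fin n),
        pInfNorm (condExp μ (insert 0 (S.map (Fin.succEmb n))) f)
          ^ (lam ^ #S * (1 - lam) ^ (n - #S)) :=
      fun b => (noiseOpN_le_prod hμ0 hμ hpos hlam0 hlam1 hstep _ (fun z => hf _) x).trans <|
        prod_le_prod (fun S _ => Real.rpow_nonneg (pInfNorm_nonneg _) _) fun S _ =>
          Real.rpow_le_rpow (pInfNorm_nonneg _) (pInfNorm_condExp_slice_le hμ S f b) (hw S)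
    have hm : ∑ b, μ b * g b ≤ ∏ S : Finset (Fin n),
        pInfNorm (condExp μ (S.map (Fin.succEmb n)) f) ^ (lam ^ #S * (1 - lam) ^ (n - #S)) := by
      rw [← noiseOpN_sum]
      exact (noiseOpN_le_prod hμ0 hμ hpos hlam0 hlam1 hstep _
        (fun z => sum_nonneg fun b _ => mul_nonneg (hμ0 b) (hf _)) x).trans <|
        prod_le_prod (fun S _ => Real.rpow_nonneg (pInfNorm_nonneg _) _) fun S _ =>
          Real.rpow_le_rpow (pInfNorm_nonneg _) (pInfNorm_condExp_average_le S f) (hw S)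
    calc noiseOpN μ ρ f (Fin.cons y x) = ρ * g y + (1 - ρ) * ∑ b, μ b * g b :=
          noiseOpN_cons μ hμ ρ f y x
      _ ≤ _ ^ lam * (∑ b, μ b * g b) ^ (1 - lam) := hstep g hg0 _ hg y
      _ ≤ _ ^ lam * _ ^ (1 - lam) := by
        gcongr
        exact Real.rpow_nonneg (prod_nonneg fun S _ => Real.rpow_nonneg (pInfNorm_nonneg _) _) _
      _ = _ := (prod_rpow_weight_succ (fun S => pInfNorm_nonneg _) lam).symm

end Tensorization

theorem ConcaveOn.add_mul_le_of_mem_Icc {s : Set ℝ} {φ : ℝ → ℝ} (hφ : ConcaveOn ℝ s φ)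
    {a b u α β : ℝ} (ha : a ∈ s) (hb : b ∈ s) (hu : u ∈ Set.Icc a b)
    (hφa : α + β * a ≤ φ a) (hφb : α + β * b ≤ φ b) : α + β * u ≤ φ u := by
  obtain ⟨hau, hub⟩ := hu
  rcases (hau.trans hub).eq_or_lt with rfl | hab
  · obtain rfl : u = a := le_antisymm hub hau
    exact hφa
  set t := (u - a) / (b - a)
  have ht0 : 0 ≤ t := div_nonneg (by linarith) (by linarith)
  have ht1 : 0 ≤ 1 - t := by rw [sub_nonneg, div_le_one (by linarith)]; linarith
  have hut : (1 - t) * a + t * b = u := by simp only [t]; field_simp; ring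
  have hconc := hφ.2 ha hb ht1 ht0 (by ring)
  simp only [smul_eq_mul, hut] at hconc
  calc α + β * u = (1 - t) * (α + β * a) + t * (α + β * b) := by rw [← hut]; ring
    _ ≤ (1 - t) * φ a + t * φ b := by gcongr
    _ ≤ φ u := hconc

theorem rpow_mul_mul_rpow_one_sub {M c : ℝ} (hM : 0 ≤ M) (hc : 0 ≤ c) (l : ℝ) :
    M ^ l * (c * M) ^ (1 - l) = c ^ (1 - l) * M := by
  rw [Real.mul_rpow hc hM, mul_left_comm, ← Real.rpow_add' hM (by simp), add_sub_cancel,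
    Real.rpow_one]

theorem rpow_mul_rpow_one_sub {M : ℝ} (hM : 0 ≤ M) (l : ℝ) : M ^ l * M ^ (1 - l) = M := by
  simpa using rpow_mul_mul_rpow_one_sub hM zero_le_one l

section OneCoordinate

variable {ρ l a t m M : ℝ}

theorem concaveOn_rpow_mul_rpow_one_sub (hl0 : 0 ≤ l) (hl1 : l ≤ 1) (hM : 0 ≤ M) :
    ConcaveOn ℝ (Set.Ici 0) fun m : ℝ => M ^ l * m ^ (1 - l) :=
  (Real.concaveOn_rpow (by linarith) (by linarith)).smul (Real.rpow_nonneg hM l)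

theorem add_mul_le_rpow_mul_rpow_of_nonneg (hl0 : 0 ≤ l) (hl1 : l ≤ 1) (hM : 0 ≤ M)
    (hmM : m ≤ M) (hρ : 0 ≤ ρ) (ha : 0 ≤ a) (ht : t ≤ M) (ham : a * M ≤ m)
    (hal : a ^ (1 - l) = ρ + (1 - ρ) * a) :
    ρ * t + (1 - ρ) * m ≤ M ^ l * m ^ (1 - l) := by
  have hφ := concaveOn_rpow_mul_rpow_one_sub hl0 hl1 hM
  calc ρ * t + (1 - ρ) * m ≤ ρ * M + (1 - ρ) * m := by gcongr
    _ ≤ M ^ l * m ^ (1 - l) := hφ.add_mul_le_of_mem_Icc (a := a * M) (b := M)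
        (Set.mem_Ici.2 (mul_nonneg ha hM)) (Set.mem_Ici.2 hM) ⟨ham, hmM⟩
        (by rw [rpow_mul_mul_rpow_one_sub hM ha, hal]; linarith)
        (by linarith [rpow_mul_rpow_one_sub hM l])

theorem add_mul_le_rpow_mul_rpow_of_nonpos (hl0 : 0 ≤ l) (hl1 : l ≤ 1) (hM : 0 ≤ M)
    (hmM : m ≤ M) (hρ : ρ ≤ 0) (ha0 : 0 < a) (ha1 : a ≤ 1) (hm0 : 0 ≤ m) (ht0 : 0 ≤ t)
    (ht : M - (M - m) / a ≤ t) (hal : (1 - a) ^ (1 - l) = (1 - ρ) * (1 - a)) :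
    ρ * t + (1 - ρ) * m ≤ M ^ l * m ^ (1 - l) := by
  have hφ := concaveOn_rpow_mul_rpow_one_sub hl0 hl1 hM
  have hM₀ : M ^ l * ((1 - a) * M) ^ (1 - l) = (1 - ρ) * (1 - a) * M := by
    rw [rpow_mul_mul_rpow_one_sub hM (by linarith), hal]
  have hM₀mem : (1 - a) * M ∈ Set.Ici 0 := mul_nonneg (by linarith) hM
  rcases le_total m ((1 - a) * M) with hm | hm
  · calc ρ * t + (1 - ρ) * m ≤ 0 + (1 - ρ) * m := by
          linarith [mul_nonpos_of_nonpos_of_nonneg hρ ht0]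
      _ ≤ M ^ l * m ^ (1 - l) := hφ.add_mul_le_of_mem_Icc (a := 0) (b := (1 - a) * M)
          Set.self_mem_Ici hM₀mem ⟨hm0, hm⟩
          (by simpa using mul_nonneg (Real.rpow_nonneg hM l) (Real.rpow_nonneg le_rfl (1 - l)))
          (by rw [hM₀]; linarith)
  · calc ρ * t + (1 - ρ) * m ≤ ρ * (M - (M - m) / a) + (1 - ρ) * m := by
          linarith [mul_le_mul_of_nonpos_left ht hρ]
      _ = ρ * M * (1 - 1 / a) + (ρ / a + (1 - ρ)) * m := by field_simp; ring
      _ ≤ M ^ l * m ^ (1 - l) := hφ.add_mul_le_of_mem_Icc (a := (1 - a) * M) (b := M)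
          hM₀mem (Set.mem_Ici.2 hM) ⟨hm, hmM⟩
          (le_of_eq (by rw [hM₀]; field_simp; ring))
          (le_of_eq (by rw [rpow_mul_rpow_one_sub hM l]; field_simp; ring))

end OneCoordinate

section Expectation

variable {Ω : Type*} [Fintype Ω] {μ : Ω → ℝ} {g : Ω → ℝ} {M : ℝ}

theorem sum_mul_le_of_le (hμ0 : ∀ b, 0 ≤ μ b) (hμ : ∑ b, μ b = 1) (hgM : ∀ y, g y ≤ M) :
    ∑ y, μ y * g y ≤ M :=
  calc ∑ y, μ y * g y ≤ ∑ y, μ y * M :=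
        sum_le_sum fun y _ => mul_le_mul_of_nonneg_left (hgM y) (hμ0 y)
    _ = M := by rw [← sum_mul, hμ, one_mul]

theorem sub_div_le_of_le {μs : ℝ} (hs0 : 0 < μs) (hμs : ∀ b, μs ≤ μ b) (hμ : ∑ b, μ b = 1)
    (hgM : ∀ y, g y ≤ M) (x : Ω) : M - (M - ∑ y, μ y * g y) / μs ≤ g x := by
  have hgap : M - ∑ y, μ y * g y = ∑ y, μ y * (M - g y) := by
    simp only [mul_sub, sum_sub_distrib, ← sum_mul, hμ, one_mul]
  have hx : μ x * (M - g x) ≤ M - ∑ y, μ y * g y := hgap ▸ single_le_sum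
    (fun y _ => mul_nonneg (hs0.le.trans (hμs y)) (sub_nonneg.2 (hgM y))) (mem_univ x)
  rw [sub_le_comm, le_div_iff₀ hs0, mul_comm]
  exact (mul_le_mul_of_nonneg_right (hμs x) (sub_nonneg.2 (hgM x))).trans hx

theorem lt_one_of_two_le_card {μs : ℝ} (hΩ : 2 ≤ Fintype.card Ω) (hμ : ∑ b, μ b = 1)
    (hμs : ∀ b, μs ≤ μ b) : μs < 1 := by
  have h := sum_le_sum fun b (_ : b ∈ univ) => hμs b
  rw [sum_const, card_univ, nsmul_eq_mul, hμ] at h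
  have : (2 : ℝ) ≤ Fintype.card Ω := by exact_mod_cast hΩ
  nlinarith

theorem add_mul_sum_nonneg {μs ρ : ℝ} (hμ0 : ∀ b, 0 ≤ μ b) (hμs : ∀ b, μs ≤ μ b)
    (hρμs : 0 ≤ ρ + (1 - ρ) * μs) (hρ1 : ρ ≤ 1) (hg : ∀ y, 0 ≤ g y) (x : Ω) :
    0 ≤ ρ * g x + (1 - ρ) * ∑ y, μ y * g y := by
  have hx : μ x * g x ≤ ∑ y, μ y * g y :=
    single_le_sum (fun y _ => mul_nonneg (hμ0 y) (hg y)) (mem_univ x)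
  have hcoef : 0 ≤ ρ + (1 - ρ) * μ x := by nlinarith [hμs x]
  nlinarith [mul_nonneg hcoef (hg x), mul_le_mul_of_nonneg_left hx (sub_nonneg.2 hρ1)]

theorem add_mul_sum_le_rpow_mul_rpow {μs ρ lam : ℝ} (hμs : ∀ b, μs ≤ μ b) (hs0 : 0 < μs)
    (hs1 : μs < 1) (hμ : ∑ b, μ b = 1) (hl : lam ∈ Set.Icc 0 1)
    (hpow_nonneg : 0 ≤ ρ → μs ^ (1 - lam) = ρ + (1 - ρ) * μs)
    (hpow_neg : ρ < 0 → (1 - μs) ^ (1 - lam) = (1 - ρ) * (1 - μs))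
    (hg : ∀ y, 0 ≤ g y) (hgM : ∀ y, g y ≤ M) (x : Ω) :
    ρ * g x + (1 - ρ) * ∑ y, μ y * g y ≤ M ^ lam * (∑ y, μ y * g y) ^ (1 - lam) := by
  have hμ0 : ∀ b, 0 ≤ μ b := fun b => hs0.le.trans (hμs b)
  have : Nonempty Ω := ⟨x⟩
  obtain ⟨y₀, hy₀⟩ := Finite.exists_max g
  have hm0 : 0 ≤ ∑ y, μ y * g y := sum_nonneg fun y _ => mul_nonneg (hμ0 y) (hg y)
  have hmM := sum_mul_le_of_le hμ0 hμ hy₀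
  calc ρ * g x + (1 - ρ) * ∑ y, μ y * g y ≤ g y₀ ^ lam * (∑ y, μ y * g y) ^ (1 - lam) := by
        rcases le_or_gt 0 ρ with hρ | hρ
        · have hm₀ : μs * g y₀ ≤ ∑ y, μ y * g y :=
            (mul_le_mul_of_nonneg_right (hμs y₀) (hg y₀)).trans
              (single_le_sum (fun y _ => mul_nonneg (hμ0 y) (hg y)) (mem_univ y₀))
          exact add_mul_le_rpow_mul_rpow_of_nonneg hl.1 hl.2 (hg y₀) hmM hρ hs0.le (hy₀ x) hm₀
            (hpow_nonneg hρ)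
        · exact add_mul_le_rpow_mul_rpow_of_nonpos hl.1 hl.2 (hg y₀) hmM hρ.le hs0 hs1.le hm0
            (hg x) (sub_div_le_of_le hs0 hμs hμ hy₀ x) (hpow_neg hρ)
    _ ≤ M ^ lam * (∑ y, μ y * g y) ^ (1 - lam) := by
        gcongr
        · exact hg y₀
        · exact hl.1
        · exact hgM y₀

end Expectation

theorem logb_mem_Icc_of_base_lt_one {b c : ℝ} (hb0 : 0 < b) (hb1 : b < 1) (hbc : b ≤ c)
    (hc1 : c ≤ 1) : Real.logb b c ∈ Set.Icc 0 1 :=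
  ⟨Real.logb_nonneg_of_base_lt_one hb0 hb1 (hb0.trans_le hbc) hc1,
    (Real.logb_le_iff_le_rpow_of_base_lt_one hb0 hb1 (hb0.trans_le hbc)).2 (by simpa using hbc)⟩

theorem exponent_spec {μs ρ lam : ℝ} (hs0 : 0 < μs) (hs1 : μs < 1)
    (hρμs : 0 ≤ ρ + (1 - ρ) * μs) (hρ1 : ρ ≤ 1)
    (hlam : lam = if 0 ≤ ρ then Real.log (ρ * (1 / μs) + 1 - ρ) / Real.log (1 / μs)
      else -(Real.log (1 - ρ) / Real.log (1 - μs))) :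
    lam ∈ Set.Icc 0 1 ∧ (0 ≤ ρ → μs ^ (1 - lam) = ρ + (1 - ρ) * μs) ∧
      (ρ < 0 → (1 - μs) ^ (1 - lam) = (1 - ρ) * (1 - μs)) := by
  split_ifs at hlam with hρ
  · have hc : 0 < ρ + (1 - ρ) * μs := by nlinarith
    have hlogb : 1 - lam = Real.logb μs (ρ + (1 - ρ) * μs) := by
      rw [hlam, Real.logb, show ρ * (1 / μs) + 1 - ρ = (ρ + (1 - ρ) * μs) / μs by field_simp; ring,
        Real.log_div hc.ne' hs0.ne', one_div, Real.log_inv]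
      field_simp [(Real.log_neg hs0 hs1).ne]
      ring
    obtain ⟨h0, h1⟩ := logb_mem_Icc_of_base_lt_one hs0 hs1 (by nlinarith) (by nlinarith)
      (c := ρ + (1 - ρ) * μs)
    refine ⟨⟨by linarith, by linarith⟩, fun _ => ?_, fun h => absurd h (not_lt.2 hρ)⟩
    rw [hlogb, Real.rpow_logb hs0 hs1.ne hc]
  · push Not at hρ
    have hlogb : lam = Real.logb (1 - μs) (1 - ρ)⁻¹ := by
      rw [hlam, Real.logb, Real.log_inv, neg_div]
    have hb0 : 0 < 1 - μs := by linarith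
    have hb1 : 1 - μs < 1 := by linarith
    refine ⟨hlogb ▸ logb_mem_Icc_of_base_lt_one hb0 hb1 ?_ ?_, fun h => absurd h (not_le.2 hρ),
      fun _ => ?_⟩
    · rw [le_inv_comm₀ hb0 (by linarith), inv_eq_one_div, le_div_iff₀ hb0]
      nlinarith
    · exact inv_le_one_of_one_le₀ (by linarith)
    · rw [Real.rpow_sub hb0, Real.rpow_one, hlogb, Real.rpow_logb hb0 hb1.ne (by simp; linarith),
        div_inv_eq_mul, mul_comm]

theorem stmt5_general {Ω : Type*} [Fintype Ω] (hΩ : 2 ≤ Fintype.card Ω)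
    (μ : Ω → ℝ) (hμpos : ∀ x, 0 < μ x) (hμsum : ∑ x, μ x = 1)
    (μs : ℝ) (hμs_le : ∀ x, μs ≤ μ x) (hμs_mem : ∃ x, μ x = μs)
    (ρ lam : ℝ) (hρ0 : -(μs / (1 - μs)) ≤ ρ) (hρ1 : ρ ≤ 1)
    (hlam : lam = if 0 ≤ ρ then Real.log (ρ * (1 / μs) + 1 - ρ) / Real.log (1 / μs)
      else -(Real.log (1 - ρ) / Real.log (1 - μs)))
    (n : ℕ) (f : (Fin n → Ω) → ℝ) (hf : ∀ x, 0 ≤ f x) :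
    pInfNorm (noiseOpN μ ρ f) ≤
      ∏ S : Finset (Fin n),
        pInfNorm (condExp μ S f) ^ (lam ^ S.card * (1 - lam) ^ (n - S.card)) := by
  have hμ0 : ∀ b, 0 ≤ μ b := fun b => (hμpos b).le
  have hs0 : 0 < μs := by obtain ⟨x, rfl⟩ := hμs_mem; exact hμpos x
  have hs1 : μs < 1 := lt_one_of_two_le_card hΩ hμsum hμs_le
  have hρμs : 0 ≤ ρ + (1 - ρ) * μs := by
    rw [neg_le, le_div_iff₀ (by linarith)] at hρ0
    linarith
  obtain ⟨hl, hpow_nonneg, hpow_neg⟩ := exponent_spec hs0 hs1 hρμs hρ1 hlam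
  have hpos := fun (g : Ω → ℝ) (hg : ∀ y, 0 ≤ g y) => add_mul_sum_nonneg hμ0 hμs_le hρμs hρ1 hg
  refine pInfNorm_le (fun x => ?_) (prod_nonneg fun S _ => Real.rpow_nonneg (pInfNorm_nonneg _) _)
  rw [abs_of_nonneg (noiseOpN_nonneg hμsum hpos f hf x)]
  exact noiseOpN_le_prod hμ0 hμsum hpos hl.1 hl.2
    (fun g hg M hgM =>
      add_mul_sum_le_rpow_mul_rpow hμs_le hs0 hs1 hμsum hl hpow_nonneg hpow_neg hg hgM) f hf x

theorem stmt5 {Ω : Type*} [Fintype Ω] [Nonempty Ω] (hΩ : 2 ≤ Fintype.card Ω)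
    (μ : Ω → ℝ) (hμpos : ∀ x, 0 < μ x) (hμsum : ∑ x, μ x = 1)
    (μs : ℝ) (hμs_le : ∀ x, μs ≤ μ x) (hμs_mem : ∃ x, μ x = μs)
    (ρ lam : ℝ) (hρ0 : -(μs / (1 - μs)) ≤ ρ) (hρ1 : ρ ≤ 1)
    (hlam : lam = if 0 ≤ ρ then Real.log (ρ * (1 / μs) + 1 - ρ) / Real.log (1 / μs)
      else -(Real.log (1 - ρ) / Real.log (1 - μs)))
    (n : ℕ) (f : (Fin n → Ω) → ℝ) (hf : ∀ x, 0 ≤ f x) :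
    pInfNorm (noiseOpN μ ρ f) ≤
      ∏ S : Finset (Fin n),
        pInfNorm (condExp μ S f) ^ (lam ^ S.card * (1 - lam) ^ (n - S.card)) :=
  stmt5_general hΩ μ hμpos hμsum μs hμs_le hμs_mem ρ lam hρ0 hρ1 hlam n f hf
end
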